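/- arXiv:2108.07509 — 4 statements merged into one kernel-verified Lean document; each statement's English description precedes it below -/
import Mathlib

section
/- The action-preserving robustified model M^{ε,pR} is forward-simulated by the original model M on controller steps: if s ∈ ε(ŝ) and (s', ŝ') ∈ A_u^{c,ε,pR}((s, ŝ), p^c) for some heterogeneous controller event with index set u and parameter tuple p^c satisfying the guard G_u^{c,ε,pR}, then s' ∈ π(s), where π is the transition function of M. -/
theorem stmt_3 (S ι : Type) (ε : S → Set S)
    (P : ι → Type) (G : ∀ i, S → P i → Prop) (A : ∀ i, S → P i → Set S)
    (π : S → Set S)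
    (hπ : ∀ (s : S) (i : ι) (p : P i), G i s p → A i s p ⊆ π s)
    (idx : S → ι)
    (Aopt : ∀ i, S → Option (P i) → Set S)
    (hAopt : ∀ (i : ι) (s : S), Aopt i s none = ∅ ∧ ∀ p, Aopt i s (some p) = A i s p)
    (u : Set ι) (pc : ∀ i, Option (P i))
    (s sh s' sh' : S)
    (hε : s ∈ ε sh)
    (hu : u = {i | ∃ sv ∈ ε sh, idx sv = i})
    (hpar : ∀ i ∈ u,
      ((∃ q : P i, ∀ sv ∈ ε sh, idx sv = i → G i sv q) →
        ∃ q : P i, pc i = some q ∧ ∀ sv ∈ ε sh, idx sv = i → G i sv q) ∧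
      ((¬ ∃ q : P i, ∀ sv ∈ ε sh, idx sv = i → G i sv q) → pc i = none))
    (haction : ∀ i ∈ u, s' ∈ Aopt i s (pc i))
    (hsh' : s' ∈ ε sh') :
    s' ∈ π s := by
  have hiu : idx s ∈ u := by rw [hu]; exact ⟨s, hε, rfl⟩
  have ha := haction _ hiu
  have hp := hpar _ hiu
  by_cases hex : ∃ q : P (idx s), ∀ sv ∈ ε sh, idx sv = idx s → G (idx s) sv q
  · obtain ⟨q, hq, hG⟩ := hp.1 hex
    rw [hq, (hAopt _ _).2] at ha
    exact hπ s (idx s) q (hG s hε rfl) ha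
  · rw [hp.2 hex, (hAopt _ _).1] at ha
    exact absurd ha (Set.notMem_empty _)
end

section
/- If the original model M is invariant-preserving (s ∈ I^S implies A_i^c(s, p) ⊆ I^S for every enabled controller action, and similarly for plant actions), then every controller transition of the action-preserving robustified model M^{ε,pR} from a state (s, ŝ) with s ∈ I^S and s ∈ ε(ŝ) leads to a state (s', ŝ') with s' ∈ I^S. -/
theorem stmt_4 (S ι : Type) (ε : S → Set S)
    (P : ι → Type) (G : ∀ i, S → P i → Prop) (A : ∀ i, S → P i → Set S)
    (I : Set S)
    (hinv : ∀ s ∈ I, ∀ (i : ι) (p : P i), G i s p → A i s p ⊆ I)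
    (idx : S → ι)
    (Aopt : ∀ i, S → Option (P i) → Set S)
    (hAopt : ∀ (i : ι) (s : S), Aopt i s none = ∅ ∧ ∀ p, Aopt i s (some p) = A i s p)
    (u : Set ι) (pc : ∀ i, Option (P i))
    (s sh s' sh' : S)
    (hI : s ∈ I) (hε : s ∈ ε sh)
    (hu : u = {i | ∃ sv ∈ ε sh, idx sv = i})
    (hpar : ∀ i ∈ u,
      ((∃ q : P i, ∀ sv ∈ ε sh, idx sv = i → G i sv q) →
        ∃ q : P i, pc i = some q ∧ ∀ sv ∈ ε sh, idx sv = i → G i sv q) ∧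
      ((¬ ∃ q : P i, ∀ sv ∈ ε sh, idx sv = i → G i sv q) → pc i = none))
    (haction : ∀ i ∈ u, s' ∈ Aopt i s (pc i))
    (hsh' : s' ∈ ε sh') :
    s' ∈ I := by
  have hmem : idx s ∈ u := by rw [hu]; exact ⟨s, hε, rfl⟩
  have hact := haction (idx s) hmem
  obtain ⟨h1, h2⟩ := hpar (idx s) hmem
  by_cases hex : ∃ q : P (idx s), ∀ sv ∈ ε sh, idx sv = idx s → G (idx s) sv q
  · obtain ⟨q, hq, hG⟩ := h1 hex
    rw [hq, (hAopt (idx s) s).2 q] at hact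
    exact hinv s hI (idx s) q (hG s hε rfl) hact
  · rw [h2 hex, (hAopt (idx s) s).1] at hact
    exact absurd hact (Set.notMem_empty s')
end

section
/- For the eco heater model with parameterized uncertainty radius Δt ≥ 0, action-preserving robustification of the heterogeneous event {heat, keep_safe_eco} is feasible if and only if Δt ≤ 2; that is, for every perceived t̂emp making both guards potentially enabled (i.e., with [t̂emp−Δt, t̂emp+Δt] meeting both {t < 30} and {30 ≤ t ≤ 40} and contained in their union) there exists an integer d such that for all t̃ ∈ [t̂emp−Δt, t̂emp+Δt]: (t̃ < 30 → 30 ≤ t̃ + d ≤ 40) and (30 ≤ t̃ ≤ 40 → 30 ≤ t̃ + d ≤ 40 ∧ −4 ≤ d ≤ 4), if and only if Δt ≤ 2. -/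
theorem stmt_15 (Δt : ℤ) (hΔt : 0 ≤ Δt) :
    ((∀ temph : ℤ,
        (∀ tv : ℤ, temph - Δt ≤ tv → tv ≤ temph + Δt → (tv < 30 ∨ (30 ≤ tv ∧ tv ≤ 40))) →
        (∃ tv : ℤ, temph - Δt ≤ tv ∧ tv ≤ temph + Δt ∧ tv < 30) →
        (∃ tv : ℤ, temph - Δt ≤ tv ∧ tv ≤ temph + Δt ∧ 30 ≤ tv ∧ tv ≤ 40) →
        ∃ d : ℤ, ∀ tv : ℤ, temph - Δt ≤ tv → tv ≤ temph + Δt →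
          (tv < 30 → 30 ≤ tv + d ∧ tv + d ≤ 40) ∧
          (30 ≤ tv → tv ≤ 40 → (30 ≤ tv + d ∧ tv + d ≤ 40) ∧ (-4 ≤ d ∧ d ≤ 4))) ↔
     Δt ≤ 2) := by
  constructor
  · intro h
    by_contra hc
    have h3t : 3 ≤ Δt := by omega
    obtain ⟨d, hd⟩ := h (31 - Δt)
      (fun tv h1 h2 => by omega)
      ⟨31 - 2*Δt, by omega, by omega, by omega⟩
      ⟨31, by omega, by omega, by omega, by omega⟩
    have A := (hd (31 - 2*Δt) (by omega) (by omega)).1 (by omega)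
    have B := ((hd 31 (by omega) (by omega)).2 (by omega) (by omega)).2
    omega
  · intro hle temph h1 h2 h3
    obtain ⟨a, ha1, ha2, ha3⟩ := h2
    obtain ⟨b, hb1, hb2, hb3, hb4⟩ := h3
    have h40 := h1 (temph + Δt) (by omega) (le_refl _)
    refine ⟨30 - temph + Δt, fun tv hta htb => ⟨fun hlt => by omega, fun hg1 hg2 => by omega⟩⟩
end

section
/- For the eco heater model with parameterized uncertainty radius Δt ≥ 0, the action-repurposing robustified heterogeneous event {heat, keep_safe_eco} (repurposing the heat action) is feasible if and only if Δt ≤ 5: for every integer t̂emp such that [t̂emp−Δt, t̂emp+Δt] meets both {t < 30} and {30 ≤ t ≤ 40} and is contained in their union, there exists an integer dh with ∀ t̃ ∈ [t̂emp−Δt, t̂emp+Δt], 30 ≤ t̃ + dh ≤ 40, precisely when Δt ≤ 5. -/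
theorem stmt_16 (Δt : ℤ) (hΔt : 0 ≤ Δt) :
    ((∀ temph : ℤ,
        (∀ tv : ℤ, temph - Δt ≤ tv → tv ≤ temph + Δt → (tv < 30 ∨ (30 ≤ tv ∧ tv ≤ 40))) →
        (∃ tv : ℤ, temph - Δt ≤ tv ∧ tv ≤ temph + Δt ∧ tv < 30) →
        (∃ tv : ℤ, temph - Δt ≤ tv ∧ tv ≤ temph + Δt ∧ 30 ≤ tv ∧ tv ≤ 40) →
        ∃ dh : ℤ, ∀ tv : ℤ, temph - Δt ≤ tv → tv ≤ temph + Δt →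
          30 ≤ tv + dh ∧ tv + dh ≤ 40) ↔
     Δt ≤ 5) := by
  constructor
  · intro h
    by_contra hgt
    push_neg at hgt
    have h6 : 6 ≤ Δt := hgt
    obtain ⟨dh, hdh⟩ := h (40 - Δt)
      (by intro tv h1 h2; omega)
      ⟨40 - 2*Δt, by omega, by omega, by omega⟩
      ⟨40, by omega, by omega, by omega, by omega⟩
    have h1 := hdh (40 - 2*Δt) (by omega) (by omega)
    have h2 := hdh 40 (by omega) (by omega)
    omega
  · intro h5 temph _ _ _
    exact ⟨30 - temph + Δt, fun tv h1 h2 => by omega⟩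
end
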